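/- arXiv:1205.4266 — 3 statements merged into one kernel-verified Lean document; each statement's English description precedes it below -/
import Mathlib

section
/- Let k ≥ 2 be an integer and let r be a real number with r > k − 2. Then (1/2)·E_k(r) ≤ Q_k(r), where E_k(r) = exp(−(1/2)·[r − k − (k − 2)·log(r/k) + log k]). (Inglot's lower bound on the chi-square tail.) -/
/-!
On `(r, ∞)` we have `t ^ (k/2 - 1) ≥ r ^ (k/2 - 1)`, so the unnormalised tail integral
`∫_r^∞ t ^ (k/2 - 1) e^(-t/2) dt` is at least `2 r ^ (k/2 - 1) e^(-r/2)`. The normalising constant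
`2 ^ (k/2) Γ(k/2)` is at most `4 k ^ ((k-1)/2) e^(-k/2)`, by the Stirling-type bound
`Γ(x) ≤ 2√2 x ^ (x - 1/2) e^(-x)` for `x ∈ {1, 3/2, 2, 5/2, …}`: it holds numerically at `x = 1`
and `x = 3/2`, and passes from `x` to `x + 1` because `(x + 1/2) log (1 + 1/x) ≥ 1`. The quotient
of the two bounds is exactly `E_k(r) / 2`.
-/

open MeasureTheory Real Set

/-- Density of the chi-square distribution with `k` degrees of freedom. -/
noncomputable def chiSqPDF (k : ℕ) (t : ℝ) : ℝ :=
  t ^ ((k : ℝ) / 2 - 1) * Real.exp (-t / 2) / (2 ^ ((k : ℝ) / 2) * Real.Gamma ((k : ℝ) / 2))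

/-- Upper-tail probability of the chi-square distribution with `k` degrees of freedom. -/
noncomputable def chiSqTail (k : ℕ) (x : ℝ) : ℝ :=
  ∫ t in Set.Ioi (max x 0), chiSqPDF k t

lemma one_le_add_half_mul_log_one_add_inv {x : ℝ} (hx : 0 < x) :
    1 ≤ (x + 1 / 2) * log (1 + x⁻¹) := by
  have hfirst : 2 / (2 * x + 1) ≤ log (1 + x⁻¹) := by
    simpa [div_eq_mul_inv] using
      le_hasSum (hasSum_log_one_add_inv hx) 0 fun j _ => by positivity
  calc 1 = (x + 1 / 2) * (2 / (2 * x + 1)) := by field_simp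
    _ ≤ (x + 1 / 2) * log (1 + x⁻¹) := by gcongr

lemma mul_rpow_sub_half_mul_exp_neg_le {x : ℝ} (hx : 0 < x) :
    x * (x ^ (x - 1 / 2) * exp (-x)) ≤ (x + 1) ^ (x + 1 - 1 / 2) * exp (-(x + 1)) := by
  have hlog : log (1 + x⁻¹) = log (x + 1) - log x := by
    rw [← log_div (by positivity) hx.ne', add_div, div_self hx.ne', one_div]
  have key := one_le_add_half_mul_log_one_add_inv hx
  rw [hlog] at key
  have hlhs : x * (x ^ (x - 1 / 2) * exp (-x)) = exp (log x * (x + 1 / 2) - x) := by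
    rw [exp_sub, exp_neg, show x + 1 / 2 = x - 1 / 2 + 1 by ring, ← rpow_def_of_pos hx,
      rpow_add_one hx.ne']
    ring
  rw [hlhs, rpow_def_of_pos (by positivity), ← exp_add, exp_le_exp]
  linarith

lemma Gamma_add_one_le_of_le {C x : ℝ} (hx : 0 < x) (hC : 0 ≤ C)
    (h : Gamma x ≤ C * (x ^ (x - 1 / 2) * exp (-x))) :
    Gamma (x + 1) ≤ C * ((x + 1) ^ (x + 1 - 1 / 2) * exp (-(x + 1))) := by
  rw [Gamma_add_one hx.ne']
  calc x * Gamma x ≤ x * (C * (x ^ (x - 1 / 2) * exp (-x))) := mul_le_mul_of_nonneg_left h hx.le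
    _ = C * (x * (x ^ (x - 1 / 2) * exp (-x))) := by ring
    _ ≤ C * ((x + 1) ^ (x + 1 - 1 / 2) * exp (-(x + 1))) :=
      mul_le_mul_of_nonneg_left (mul_rpow_sub_half_mul_exp_neg_le hx) hC

lemma Gamma_add_nat_le_of_le {C x : ℝ} (hx : 0 < x) (hC : 0 ≤ C)
    (h : Gamma x ≤ C * (x ^ (x - 1 / 2) * exp (-x))) (n : ℕ) :
    Gamma (x + n) ≤ C * ((x + n) ^ (x + n - 1 / 2) * exp (-(x + n))) := by
  induction n with
  | zero => simpa using h
  | succ n ih =>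
    push_cast
    rw [← add_assoc]
    exact Gamma_add_one_le_of_le (by positivity) hC ih

lemma Gamma_one_le : Gamma 1 ≤ 2 * √2 * (1 ^ (1 - 1 / 2 : ℝ) * exp (-1)) := by
  have hsqrt : 1.4 < √2 := lt_sqrt_of_sq_lt (by norm_num)
  rw [Gamma_one, one_rpow, one_mul, exp_neg, ← div_eq_mul_inv, le_div_iff₀ (exp_pos 1), one_mul]
  linarith [exp_one_lt_d9]

lemma Gamma_three_halves_le :
    Gamma (3 / 2) ≤ 2 * √2 * ((3 / 2) ^ (3 / 2 - 1 / 2 : ℝ) * exp (-(3 / 2))) := by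
  have hΓ : Gamma (3 / 2) = √π / 2 := by
    rw [show (3 / 2 : ℝ) = 1 / 2 + 1 by norm_num, Gamma_add_one (by norm_num),
      Gamma_one_half_eq]
    ring
  have hexp3 : exp 3 < 21 := by
    calc exp 3 = exp 1 ^ 3 := by rw [← exp_nat_mul]; norm_num
      _ < 2.7182818286 ^ 3 := pow_lt_pow_left₀ exp_one_lt_d9 (exp_pos 1).le (by norm_num)
      _ < 21 := by norm_num
  have hsq : √π * exp (3 / 2) ≤ 6 * √2 := by
    rw [exp_half, ← sqrt_mul pi_pos.le, show (6 : ℝ) = √(6 ^ 2) by simp,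
      ← sqrt_mul (by positivity)]
    exact sqrt_le_sqrt (by nlinarith [pi_lt_d2, exp_pos 3])
  rw [hΓ, show (3 / 2 - 1 / 2 : ℝ) = 1 by norm_num, rpow_one, exp_neg, div_le_iff₀ two_pos,
    show 2 * √2 * (3 / 2 * (exp (3 / 2))⁻¹) * 2 = 6 * √2 / exp (3 / 2) by ring,
    le_div_iff₀ (exp_pos _)]
  exact hsq

lemma Gamma_half_le {k : ℕ} (hk : 2 ≤ k) :
    Gamma ((k : ℝ) / 2) ≤
      2 * √2 * (((k : ℝ) / 2) ^ ((k : ℝ) / 2 - 1 / 2) * exp (-((k : ℝ) / 2))) := by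
  obtain ⟨n, rfl | rfl⟩ : ∃ n : ℕ, k = 2 * n + 2 ∨ k = 2 * n + 3 := ⟨(k - 2) / 2, by omega⟩
  · rw [show ((2 * n + 2 : ℕ) : ℝ) / 2 = 1 + n by push_cast; ring]
    exact Gamma_add_nat_le_of_le one_pos (by positivity) Gamma_one_le n
  · rw [show ((2 * n + 3 : ℕ) : ℝ) / 2 = 3 / 2 + n by push_cast; ring]
    exact Gamma_add_nat_le_of_le (by norm_num) (by positivity) Gamma_three_halves_le n

lemma two_rpow_mul_Gamma_half_le {k : ℕ} (hk : 2 ≤ k) :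
    2 ^ ((k : ℝ) / 2) * Gamma ((k : ℝ) / 2) ≤
      4 * ((k : ℝ) ^ ((k : ℝ) / 2 - 1 / 2) * exp (-((k : ℝ) / 2))) := by
  have h2 : (2 : ℝ) ^ ((k : ℝ) / 2) = √2 * 2 ^ ((k : ℝ) / 2 - 1 / 2) := by
    rw [sqrt_eq_rpow, ← rpow_add two_pos]; ring_nf
  calc 2 ^ ((k : ℝ) / 2) * Gamma ((k : ℝ) / 2)
      ≤ 2 ^ ((k : ℝ) / 2) *
          (2 * √2 * (((k : ℝ) / 2) ^ ((k : ℝ) / 2 - 1 / 2) * exp (-((k : ℝ) / 2)))) := by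
        gcongr; exact Gamma_half_le hk
    _ = 4 * ((k : ℝ) ^ ((k : ℝ) / 2 - 1 / 2) * exp (-((k : ℝ) / 2))) := by
        rw [h2, div_rpow (Nat.cast_nonneg k) two_pos.le]
        field_simp
        rw [sq_sqrt two_pos.le]; norm_num

lemma rpow_mul_exp_neg_mul_div_le_integral_Ioi {a b r : ℝ} (ha : 0 ≤ a) (hb : 0 < b)
    (hr : 0 ≤ r) : r ^ a * exp (-b * r) / b ≤ ∫ t in Ioi r, t ^ a * exp (-b * t) := by
  have hexp_int : IntegrableOn (fun t => exp (-b * t)) (Ioi r) :=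
    integrableOn_exp_mul_Ioi (by linarith) r
  have hint : IntegrableOn (fun t : ℝ => t ^ a * exp (-b * t)) (Ioi r) := by
    have := integrableOn_rpow_mul_exp_neg_mul_rpow (p := 1) (by linarith : -1 < a) one_pos hb
    simp only [rpow_one] at this
    exact this.mono_set (Ioi_subset_Ioi hr)
  calc r ^ a * exp (-b * r) / b = ∫ t in Ioi r, r ^ a * exp (-b * t) := by
        rw [integral_const_mul, integral_exp_mul_Ioi (by linarith)]; ring
    _ ≤ ∫ t in Ioi r, t ^ a * exp (-b * t) :=
      setIntegral_mono_on (hexp_int.const_mul _) hint measurableSet_Ioi fun t ht =>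
        mul_le_mul_of_nonneg_right (rpow_le_rpow hr ht.le ha) (exp_pos _).le

lemma chiSqTail_eq_integral_div {x : ℝ} (hx : 0 ≤ x) (k : ℕ) :
    chiSqTail k x = (∫ t in Ioi x, t ^ ((k : ℝ) / 2 - 1) * exp (-(1 / 2) * t)) /
      (2 ^ ((k : ℝ) / 2) * Gamma ((k : ℝ) / 2)) := by
  rw [chiSqTail, max_eq_left hx, ← integral_div]
  congr with t
  rw [chiSqPDF]; ring_nf

lemma half_mul_exp_eq_rpow_mul_exp_div {k r : ℝ} (hk : 0 < k) (hr : 0 < r) :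
    1 / 2 * exp (-(1 / 2) * (r - k - (k - 2) * log (r / k) + log k)) =
      r ^ (k / 2 - 1) * exp (-(1 / 2) * r) / (1 / 2) /
        (4 * (k ^ (k / 2 - 1 / 2) * exp (-(k / 2)))) := by
  rw [rpow_def_of_pos hr, rpow_def_of_pos hk, log_div hr.ne' hk.ne',
    show -(1 / 2) * (r - k - (k - 2) * (log r - log k) + log k) =
      (log r * (k / 2 - 1) + -(1 / 2) * r) - (log k * (k / 2 - 1 / 2) + -(k / 2)) by ring,
    exp_sub, exp_add, exp_add]
  field_simp; ring

/-- Inglot's lower bound on the chi-square tail: for `k ≥ 2` and `r > k - 2`,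
`(1/2)·E_k(r) ≤ Q_k(r)` where
`E_k(r) = exp(−(1/2)·[r − k − (k − 2)·log(r/k) + log k])`. -/
theorem inglot_lower_bound (k : ℕ) (hk : 2 ≤ k) (r : ℝ) (hr : (k : ℝ) - 2 < r) :
    (1 / 2) * Real.exp (-(1 / 2) *
        (r - k - ((k : ℝ) - 2) * Real.log (r / k) + Real.log k))
      ≤ chiSqTail k r := by
  have hk2 : (2 : ℝ) ≤ k := by exact_mod_cast hk
  have hr0 : 0 < r := by linarith
  have hI := rpow_mul_exp_neg_mul_div_le_integral_Ioi (a := (k : ℝ) / 2 - 1) (b := 1 / 2)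
    (by linarith) (by norm_num) hr0.le
  rw [half_mul_exp_eq_rpow_mul_exp_div (by linarith) hr0, chiSqTail_eq_integral_div hr0.le]
  have hbound_nonneg : 0 ≤ r ^ ((k : ℝ) / 2 - 1) * exp (-(1 / 2) * r) / (1 / 2) := by positivity
  exact div_le_div₀ (hbound_nonneg.trans hI) hI (by positivity) (two_rpow_mul_Gamma_half_le hk)
end

section
/- Let k ≥ 2 be an integer and let r be a real number with r > k − 2. Then Q_k(r) ≤ (1/√π) · (r/(r − k + 2)) · E_k(r), where E_k(r) = exp(−(1/2)·[r − k − (k − 2)·log(r/k) + log k]). (Inglot's upper bound on the chi-square tail.) -/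
/-!
On `t > r`, `log (t / r) ≤ t / r - 1` gives `t ^ ν ≤ r ^ ν * exp (ν * (t / r - 1))` for
`ν = k / 2 - 1`, so the chi-square integrand is dominated by `exp (-(1 / 2 - ν / r) * t)`, whose
tail integral is explicit; the hypothesis `r > k - 2` says exactly `ν / r < 1 / 2`.
The normalising constant `2 ^ (k / 2) * Γ (k / 2)` is then bounded below by Stirling's inequality
`Γ x ≥ √(2π) x ^ (x - 1/2) e ^ (-x)` at `x = k / 2`. For half-integers `x = m + 1/2` this follows
from `Γ (m + 1/2) = (2m)! √π / (4 ^ m m!)`, the lower Stirling bound for `(2m)!`, and Robbins'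
upper bound `m! ≤ √(2πm) (m/e) ^ m e ^ (1 / (12 m))`.
-/

open MeasureTheory Real Set

open Filter Topology Stirling
open scoped Nat

/-- Robbins' bound on `log (stirlingSeq n) - log (stirlingSeq (n + 1))` telescopes:
`log (stirlingSeq n) - 1 / (12 n)` increases to `log √π`. -/
theorem log_stirlingSeq_le_log_sqrt_pi_add {n : ℕ} (hn : n ≠ 0) :
    log (stirlingSeq n) ≤ log √π + 1 / (12 * n) := by
  set g : ℕ → ℝ := fun j => log (stirlingSeq (j + 1)) - 1 / (12 * ((j : ℝ) + 1))
  have hmono : Monotone g := monotone_nat_of_le_succ fun j => by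
    have := log_stirlingSeq_sdiff_le (j + 1)
    have h : (1 : ℝ) / (12 * ((j : ℝ) + 1)) - 1 / (12 * ((j : ℝ) + 1 + 1)) =
        1 / (12 * ((j + 1 : ℕ) : ℝ) * ((j + 1 : ℕ) + 1)) := by
      push_cast; field_simp; ring
    simp only [g]; push_cast at *; linarith
  have hlim : Tendsto g atTop (𝓝 (log √π - 0 / 12)) :=
    ((tendsto_stirlingSeq_sqrt_pi.comp (tendsto_add_atTop_nat 1)).log (by positivity)).sub
      ((tendsto_one_div_add_atTop_nhds_zero_nat.div_const 12).congr fun j => by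
        rw [div_div, mul_comm])
  obtain ⟨j, rfl⟩ : ∃ j, n = j + 1 := ⟨n - 1, by omega⟩
  have := hmono.ge_of_tendsto hlim j
  simp only [g, zero_div, sub_zero] at this
  push_cast
  linarith

theorem factorial_le_stirling {n : ℕ} (hn : n ≠ 0) :
    (n ! : ℝ) ≤ √(2 * π * n) * (n / exp 1) ^ n * exp (1 / (12 * n)) := by
  have h := exp_le_exp.2 (log_stirlingSeq_le_log_sqrt_pi_add hn)
  obtain ⟨j, rfl⟩ : ∃ j, n = j + 1 := ⟨n - 1, by omega⟩
  rw [exp_log (stirlingSeq'_pos j), exp_add, exp_log (by positivity), stirlingSeq,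
    div_le_iff₀ (by positivity)] at h
  refine h.trans_eq ?_
  rw [sqrt_mul' _ (Nat.cast_nonneg _), sqrt_mul' _ (Nat.cast_nonneg _), sqrt_mul zero_le_two]
  ring

theorem Gamma_natCast_add_half_eq_factorial (m : ℕ) :
    Gamma (m + 1 / 2) = (2 * m) ! / (4 ^ m * m !) * √π := by
  rw [Gamma_nat_add_half]
  rcases m with _ | m
  · simp
  · have h := Nat.factorial_eq_mul_doubleFactorial (2 * m + 1)
    rw [show 2 * m + 1 + 1 = 2 * (m + 1) by ring, Nat.doubleFactorial_two_mul] at h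
    rw [show 2 * (m + 1) - 1 = 2 * m + 1 by omega, h, show (4 : ℝ) = 2 ^ 2 by norm_num,
      ← pow_mul]
    push_cast
    field_simp
    ring

theorem one_add_one_div_two_mul_pow_le_exp {m : ℕ} (hm : m ≠ 0) :
    (1 + 1 / (2 * m : ℝ)) ^ m ≤ exp (1 / 2 - 1 / (12 * m)) := by
  have hm1 : (1 : ℝ) ≤ m := by exact_mod_cast Nat.one_le_iff_ne_zero.2 hm
  -- `x` is chosen so that `(1 + x) / (1 - x) = 1 + 1 / (2 m)`: the first term of the series of
  -- `artanh x = log ((1 + x) / (1 - x)) / 2`, plus its remainder, is then sharp enough.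
  set x : ℝ := 1 / (4 * m + 1) with hx
  have hx1 : x < 1 := by rw [hx, div_lt_one (by positivity)]; linarith
  have hlog := log_div_le_sum_range_add (by positivity) hx1 1
  have hfrac : (1 + x) / (1 - x) = 1 + 1 / (2 * m) := by
    rw [hx]; field_simp; ring
  have htail : x ^ 3 / (1 - x ^ 2) = 1 / ((4 * m + 1) * (4 * m) * (4 * m + 2)) := by
    have : 1 - x ^ 2 ≠ 0 := by nlinarith [show 0 < x by positivity]
    rw [div_eq_div_iff this (by positivity), hx]; field_simp; ring
  simp only [hfrac, Finset.sum_range_one, mul_zero, zero_add, pow_one, CharP.cast_eq_zero,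
    div_one, mul_one, htail] at hlog
  have hbound : 2 * m * (x + 1 / ((4 * m + 1) * (4 * m) * (4 * m + 2))) ≤
      1 / 2 - 1 / (12 * m) := by
    rw [hx, div_add_div _ _ (by positivity) (by positivity), sub_div' (by positivity),
      mul_div_assoc', div_le_div_iff₀ (by positivity) (by positivity)]
    -- equality holds at `m = 1`
    nlinarith [mul_nonneg (by positivity : (0 : ℝ) ≤ 4 * m * (4 * m + 1) ^ 2)
      (by linarith : (0 : ℝ) ≤ 2 * m - 2)]
  rw [← exp_log (by positivity : (0 : ℝ) < (1 + 1 / (2 * m)) ^ m), Real.log_pow, exp_le_exp]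
  nlinarith

theorem le_Gamma_natCast_stirling {m : ℕ} (hm : m ≠ 0) :
    √(2 * π) * (m : ℝ) ^ ((m : ℝ) - 1 / 2) * exp (-m) ≤ Gamma m := by
  have hm0 : (0 : ℝ) < m := by positivity
  have hΓ : Gamma m = m ! / m := by
    rw [eq_div_iff hm0.ne', mul_comm, ← Gamma_add_one hm0.ne', Gamma_nat_eq_factorial]
  calc √(2 * π) * (m : ℝ) ^ ((m : ℝ) - 1 / 2) * exp (-m)
      = √(2 * π * m) * (m / exp 1) ^ m / m := by
        rw [rpow_sub hm0, rpow_natCast, ← sqrt_eq_rpow, sqrt_mul' _ hm0.le, div_pow,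
          exp_neg, ← exp_one_pow]
        field_simp
        rw [sq_sqrt hm0.le]
    _ ≤ m ! / m := by gcongr; exact le_factorial_stirling m
    _ = Gamma m := hΓ.symm

theorem le_Gamma_natCast_add_half_stirling {m : ℕ} (hm : m ≠ 0) :
    √(2 * π) * ((m : ℝ) + 1 / 2) ^ ((m : ℝ) + 1 / 2 - 1 / 2) * exp (-(m + 1 / 2))
      ≤ Gamma (m + 1 / 2) := by
  have hm0 : (0 : ℝ) < m := by positivity
  have hsplit : (m : ℝ) + 1 / 2 = m * (1 + 1 / (2 * m)) := by field_simp
  have h2m : √(2 * π * ((2 * m : ℕ) : ℝ)) = √2 * √(2 * π * m) := by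
    rw [← sqrt_mul zero_le_two]; push_cast; ring_nf
  have hpow : (((2 * m : ℕ) : ℝ) / exp 1) ^ (2 * m) = 4 ^ m * ((m / exp 1) ^ m) ^ 2 := by
    rw [show (4 : ℝ) ^ m = 2 ^ (2 * m) by rw [pow_mul]; norm_num]; push_cast; ring
  calc √(2 * π) * ((m : ℝ) + 1 / 2) ^ ((m : ℝ) + 1 / 2 - 1 / 2) * exp (-(m + 1 / 2))
      = √(2 * π) * (m : ℝ) ^ m * (1 + 1 / (2 * m)) ^ m * exp (-(m + 1 / 2)) := by
        rw [add_sub_cancel_right, rpow_natCast, hsplit, mul_pow]; ring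
    _ ≤ √(2 * π) * (m : ℝ) ^ m * exp (1 / 2 - 1 / (12 * m)) * exp (-(m + 1 / 2)) := by
        gcongr; exact one_add_one_div_two_mul_pow_le_exp hm
    _ = √(2 * π * ((2 * m : ℕ) : ℝ)) * (((2 * m : ℕ) : ℝ) / exp 1) ^ (2 * m) /
          (4 ^ m * (√(2 * π * m) * (m / exp 1) ^ m * exp (1 / (12 * m)))) * √π := by
        have hexp : exp (1 / 2 - 1 / (12 * m)) * exp (-(m + 1 / 2)) =
            (exp 1 ^ m * exp (1 / (12 * m)))⁻¹ := by
          rw [← exp_add, exp_one_pow, ← exp_add, ← exp_neg]; ring_nf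
        rw [h2m, hpow, sqrt_mul zero_le_two, div_pow, mul_assoc _ (exp _), hexp]
        field_simp
    _ ≤ (2 * m) ! / (4 ^ m * m !) * √π := by
        gcongr
        · exact le_factorial_stirling _
        · exact factorial_le_stirling hm
    _ = Gamma (m + 1 / 2) := (Gamma_natCast_add_half_eq_factorial m).symm

theorem le_Gamma_half_natCast_stirling {k : ℕ} (hk : 2 ≤ k) :
    √(2 * π) * ((k : ℝ) / 2) ^ ((k : ℝ) / 2 - 1 / 2) * exp (-((k : ℝ) / 2))
      ≤ Gamma ((k : ℝ) / 2) := by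
  obtain ⟨m, rfl | rfl⟩ := Nat.even_or_odd' k
  · rw [show ((2 * m : ℕ) : ℝ) / 2 = m by push_cast; ring]
    exact le_Gamma_natCast_stirling (by omega)
  · rw [show ((2 * m + 1 : ℕ) : ℝ) / 2 = m + 1 / 2 by push_cast; ring]
    exact le_Gamma_natCast_add_half_stirling (by omega)

theorem rpow_le_rpow_mul_exp {ν r t : ℝ} (hν : 0 ≤ ν) (hr : 0 < r) (ht : 0 < t) :
    t ^ ν ≤ r ^ ν * exp (ν * (t / r - 1)) :=
  calc t ^ ν = r ^ ν * (t / r) ^ ν := by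
        rw [← mul_rpow hr.le (by positivity), mul_div_cancel₀ _ hr.ne']
    _ = r ^ ν * exp (ν * log (t / r)) := by rw [rpow_def_of_pos (div_pos ht hr), mul_comm ν]
    _ ≤ r ^ ν * exp (ν * (t / r - 1)) := by
        gcongr; exact log_le_sub_one_of_pos (by positivity)

theorem integral_Ioi_rpow_mul_exp_neg_mul_le {ν a r : ℝ} (hν : 0 ≤ ν) (hr : 0 < r)
    (h : ν / r < a) :
    ∫ t in Ioi r, t ^ ν * exp (-(a * t)) ≤ r ^ ν * exp (-(a * r)) / (a - ν / r) := by
  have hc : 0 < a - ν / r := sub_pos.2 h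
  have hint : IntegrableOn (fun t => r ^ ν * exp (-ν) * exp (-(a - ν / r) * t)) (Ioi r) :=
    (integrableOn_exp_mul_Ioi (neg_neg_of_pos hc) r).const_mul _
  have hbound : ∀ t ∈ Ioi r,
      t ^ ν * exp (-(a * t)) ≤ r ^ ν * exp (-ν) * exp (-(a - ν / r) * t) := by
    intro t ht
    have ht0 : 0 < t := hr.trans ht
    calc t ^ ν * exp (-(a * t)) ≤ r ^ ν * exp (ν * (t / r - 1)) * exp (-(a * t)) := by
          gcongr; exact rpow_le_rpow_mul_exp hν hr ht0
      _ = _ := by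
          rw [mul_assoc, mul_assoc, ← exp_add, ← exp_add]; congr 2; field_simp; ring
  calc ∫ t in Ioi r, t ^ ν * exp (-(a * t))
      ≤ ∫ t in Ioi r, r ^ ν * exp (-ν) * exp (-(a - ν / r) * t) := by
        refine integral_mono_of_nonneg ?_ hint ?_ <;>
          filter_upwards [ae_restrict_mem measurableSet_Ioi] with t ht
        · have : 0 < t := hr.trans ht
          positivity
        · exact hbound t ht
    _ = r ^ ν * exp (-(a * r)) / (a - ν / r) := by
        rw [integral_const_mul, integral_exp_mul_Ioi (neg_neg_of_pos hc), neg_div_neg_eq,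
          ← mul_div_assoc, mul_assoc, ← exp_add]
        congr 3; field_simp; ring

theorem chiSqTail_eq_of_pos (k : ℕ) {r : ℝ} (hr : 0 < r) :
    chiSqTail k r = (∫ t in Ioi r, t ^ ((k : ℝ) / 2 - 1) * exp (-(1 / 2 * t))) /
      (2 ^ ((k : ℝ) / 2) * Gamma ((k : ℝ) / 2)) := by
  rw [chiSqTail, max_eq_left hr.le, ← integral_div]
  simp only [chiSqPDF, neg_div, one_div, inv_mul_eq_div]

/-- Inglot's upper bound on the chi-square tail: for `k ≥ 2` and `r > k - 2`,
`Q_k(r) ≤ (1/√π) · (r/(r − k + 2)) · E_k(r)` where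
`E_k(r) = exp(−(1/2)·[r − k − (k − 2)·log(r/k) + log k])`. -/
theorem inglot_upper_bound (k : ℕ) (hk : 2 ≤ k) (r : ℝ) (hr : (k : ℝ) - 2 < r) :
    chiSqTail k r
      ≤ (1 / Real.sqrt π) * (r / (r - k + 2)) *
        Real.exp (-(1 / 2) *
          (r - k - ((k : ℝ) - 2) * Real.log (r / k) + Real.log k)) := by
  have hk2 : (2 : ℝ) ≤ k := by exact_mod_cast hk
  have hr0 : 0 < r := by linarith
  have hlt : ((k : ℝ) / 2 - 1) / r < 1 / 2 := by rw [div_lt_iff₀ hr0]; linarith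
  calc chiSqTail k r
      ≤ r ^ ((k : ℝ) / 2 - 1) * exp (-(1 / 2 * r)) / (1 / 2 - ((k : ℝ) / 2 - 1) / r) /
          (2 ^ ((k : ℝ) / 2) * (√(2 * π) * ((k : ℝ) / 2) ^ ((k : ℝ) / 2 - 1 / 2) *
            exp (-((k : ℝ) / 2)))) := by
        rw [chiSqTail_eq_of_pos k hr0]
        gcongr
        · exact integral_Ioi_rpow_mul_exp_neg_mul_le (by linarith) hr0 hlt
        · exact le_Gamma_half_natCast_stirling hk
    _ = _ := by
        have hk0 : (0 : ℝ) < k := by linarith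
        have hrk : 0 < r - k + 2 := by linarith
        have hc : 1 / 2 - ((k : ℝ) / 2 - 1) / r = (r - k + 2) / (2 * r) := by field_simp; ring
        rw [hc, sqrt_mul zero_le_two, sqrt_eq_rpow 2, rpow_def_of_pos hr0, rpow_def_of_pos two_pos,
          rpow_def_of_pos two_pos, rpow_def_of_pos (by positivity : (0 : ℝ) < k / 2),
          log_div hr0.ne' hk0.ne', log_div hk0.ne' two_ne_zero]
        field_simp
        nth_rw 1 [← exp_log two_pos]
        simp only [← exp_add]
        congr 1
        ring
end

section
/- With m = 2 transmissions, for every real u with 0 ≤ u < 1/2, the joint error probability satisfies P(ζ_1 ∩ ζ_2) ≤ e^{−u r_2²} · Q_{I_1}((1 − 2u) r_1²) / (1 − 2u)^{N_2/2}; consequently P(ζ_1 ∩ ζ_2) ≤ inf_{0 ≤ u < 1/2} e^{−u r_2²} · Q_{I_1}((1 − 2u) r_1²) / (1 − 2u)^{N_2/2}. (Chernoff upper bound of Lemma 1.) -/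
open MeasureTheory ProbabilityTheory Real Set

/-!
Write `S_N = Z₁² + ⋯ + Z_N²`. On `ζ₁`, the indicator of `ζ₂` is at most
`exp (u (S_{N₂} - r₂²))` (Chernoff). Since `S_{N₂} = S_{N₁} + T` with `T` independent of
`S_{N₁}`, the expectation factors into `E[1{S_{N₁} > r₁²} exp (u S_{N₁})] · E[exp (u T)]`.
The second factor is the moment generating function `(1 - 2u)^{-I₂/2}` of a sum of `I₂` squared
standard Gaussians. In the first, `S_{N₁}` has the chi-square density (polar coordinates in
`ℝ^{I₁}`), and the exponential tilt `e^{ut} f_k(t) = (1 - 2u)^{1 - k/2} f_k((1 - 2u) t)` turns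
it into `(1 - 2u)^{-I₁/2} Q_{I₁}((1 - 2u) r₁²)`.
-/

lemma exp_mul_chiSqPDF (k : ℕ) {u t : ℝ} (hu : u < 1 / 2) (ht : 0 ≤ t) :
    exp (u * t) * chiSqPDF k t
      = (1 - 2 * u) ^ (1 - (k : ℝ) / 2) * chiSqPDF k ((1 - 2 * u) * t) := by
  have hc : 0 < 1 - 2 * u := by linarith
  have hexp : exp (u * t) * exp (-t / 2) = exp (-((1 - 2 * u) * t) / 2) := by
    rw [← exp_add]; ring_nf
  have hinv : (1 - 2 * u) ^ (1 - (k : ℝ) / 2) * (1 - 2 * u) ^ ((k : ℝ) / 2 - 1) = 1 := by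
    rw [← rpow_add hc]; simp
  rw [chiSqPDF, chiSqPDF, mul_rpow hc.le ht, ← hexp]
  linear_combination (-(exp (u * t) * t ^ ((k : ℝ) / 2 - 1) * exp (-t / 2)
    / (2 ^ ((k : ℝ) / 2) * Gamma ((k : ℝ) / 2)))) * hinv

lemma setIntegral_exp_mul_chiSqPDF (k : ℕ) {u a : ℝ} (hu : u < 1 / 2) (ha : 0 ≤ a) :
    ∫ t in Ioi a, exp (u * t) * chiSqPDF k t
      = chiSqTail k ((1 - 2 * u) * a) / (1 - 2 * u) ^ ((k : ℝ) / 2) := by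
  have hc : 0 < 1 - 2 * u := by linarith
  have hpow : (1 - 2 * u) ^ (1 - (k : ℝ) / 2) * (1 - 2 * u)⁻¹
      = ((1 - 2 * u) ^ ((k : ℝ) / 2))⁻¹ := by
    rw [← rpow_neg_one, ← rpow_add hc, ← rpow_neg hc.le]; ring_nf
  rw [setIntegral_congr_fun measurableSet_Ioi fun t ht =>
      exp_mul_chiSqPDF k hu (ha.trans (le_of_lt ht)),
    integral_const_mul, integral_comp_mul_left_Ioi (chiSqPDF k) a hc, smul_eq_mul, chiSqTail,
    max_eq_left (by positivity), ← mul_assoc, hpow, inv_mul_eq_div]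

lemma integral_Ioi_pow_smul_comp_sq {n : ℕ} (hn : 0 < n) (f : ℝ → ℝ) :
    ∫ r in Ioi (0 : ℝ), r ^ (n - 1) • f (r ^ 2)
      = 2⁻¹ * ∫ t in Ioi (0 : ℝ), t ^ ((n : ℝ) / 2 - 1) * f t := by
  rw [← integral_comp_rpow_Ioi (fun t => t ^ ((n : ℝ) / 2 - 1) * f t) two_ne_zero,
    ← integral_const_mul]
  refine setIntegral_congr_fun measurableSet_Ioi fun r (hr : 0 < r) => ?_
  have hpow : r ^ (n - 1) = (r ^ (2 : ℝ)) ^ ((n : ℝ) / 2 - 1) * r ^ ((2 : ℝ) - 1) := by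
    rw [← rpow_mul hr.le, ← rpow_add hr, ← rpow_natCast, Nat.cast_sub hn]
    ring_nf
  rw [hpow, abs_two, smul_eq_mul, smul_eq_mul, rpow_two]
  ring

lemma integral_comp_sum_sq (ι : Type*) [Fintype ι] [Nonempty ι] (f : ℝ → ℝ) :
    ∫ x : ι → ℝ, f (∑ i, x i ^ 2)
      = π ^ ((Fintype.card ι : ℝ) / 2) / Gamma ((Fintype.card ι : ℝ) / 2)
          * ∫ t in Ioi (0 : ℝ), t ^ ((Fintype.card ι : ℝ) / 2 - 1) * f t := by
  set n := Fintype.card ι with hn_def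
  have hn : 0 < n := Fintype.card_pos
  have hnorm (y : EuclideanSpace ℝ ι) : ∑ i, y.ofLp i ^ 2 = ‖y‖ ^ 2 := by
    simp [EuclideanSpace.norm_sq_eq]
  have hball : volume.real (Metric.ball (0 : EuclideanSpace ℝ ι) 1)
      = √π ^ n / Gamma (n / 2 + 1) := by
    rw [measureReal_def, EuclideanSpace.volume_ball, ENNReal.ofReal_one, one_pow, one_mul,
      ENNReal.toReal_ofReal (by positivity)]
  have hsqrt : √π ^ n = π ^ ((n : ℝ) / 2) := by
    rw [sqrt_eq_rpow, ← rpow_natCast, ← rpow_mul pi_pos.le]; ring_nf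
  have hΓ : Gamma ((n : ℝ) / 2 + 1) = (n : ℝ) / 2 * Gamma ((n : ℝ) / 2) :=
    Gamma_add_one (by positivity)
  rw [← (EuclideanSpace.volume_preserving_symm_measurableEquiv_toLp ι).integral_comp'
    (fun x => f (∑ i, x i ^ 2))]
  simp only [MeasurableEquiv.toLp_symm_apply, hnorm]
  rw [integral_fun_norm_addHaar volume (fun r => f (r ^ 2)), finrank_euclideanSpace, ← hn_def,
    hball, integral_Ioi_pow_smul_comp_sq hn, nsmul_eq_mul, smul_eq_mul, hsqrt, hΓ]
  field_simp

open scoped NNReal in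
lemma pi_gaussianReal_eq_withDensity (ι : Type*) [Fintype ι] (m : ℝ) {v : ℝ≥0}
    (hv : v ≠ 0) :
    Measure.pi (fun _ : ι => gaussianReal m v)
      = volume.withDensity (fun x => ENNReal.ofReal (∏ i, gaussianPDFReal m v (x i))) := by
  refine Measure.pi_eq fun s hs => ?_
  have hindicator : (univ.pi s).indicator
        (fun x : ι → ℝ => ENNReal.ofReal (∏ i, gaussianPDFReal m v (x i)))
      = fun x => ENNReal.ofReal (∏ i, (s i).indicator (gaussianPDFReal m v) (x i)) := by
    ext x
    by_cases hx : ∀ i, x i ∈ s i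
    · rw [indicator_of_mem (mem_univ_pi.mpr hx)]
      exact congrArg _ (Finset.prod_congr rfl fun i _ => (indicator_of_mem (hx i) _).symm)
    · obtain ⟨i, hi⟩ := not_forall.mp hx
      rw [indicator_of_notMem (fun h => hx (mem_univ_pi.mp h)),
        Finset.prod_eq_zero (Finset.mem_univ i) (indicator_of_notMem hi _), ENNReal.ofReal_zero]
  have hnonneg (i : ι) (y : ℝ) : 0 ≤ (s i).indicator (gaussianPDFReal m v) y :=
    indicator_nonneg (fun y _ => gaussianPDFReal_nonneg m v y) y
  rw [withDensity_apply _ (.univ_pi hs), ← lintegral_indicator (.univ_pi hs)]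
  simp only [hindicator, volume_pi]
  rw [← ofReal_integral_eq_lintegral_ofReal
      (Integrable.fintype_prod fun i => (integrable_gaussianPDFReal m v).indicator (hs i))
      (ae_of_all _ fun x => Finset.prod_nonneg fun i _ => hnonneg i (x i)),
    integral_fintype_prod_eq_prod (f := fun i => (s i).indicator (gaussianPDFReal m v)),
    ENNReal.ofReal_prod_of_nonneg fun i _ => integral_nonneg (hnonneg i)]
  exact Finset.prod_congr rfl fun i _ => by
    rw [gaussianReal_apply_eq_integral m hv, integral_indicator (hs i)]

lemma prod_gaussianPDFReal_zero_one {ι : Type*} [Fintype ι] (x : ι → ℝ) :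
    ∏ i, gaussianPDFReal 0 1 (x i)
      = (2 * π) ^ (-((Fintype.card ι : ℝ) / 2)) * exp (-(∑ i, x i ^ 2) / 2) := by
  have hsqrt : (√(2 * π))⁻¹ ^ Fintype.card ι
      = (2 * π) ^ (-((Fintype.card ι : ℝ) / 2)) := by
    rw [sqrt_eq_rpow, ← rpow_neg (by positivity), ← rpow_natCast, ← rpow_mul (by positivity)]
    ring_nf
  simp only [gaussianPDFReal, NNReal.coe_one, mul_one, sub_zero, Finset.prod_mul_distrib,
    Finset.prod_const, Finset.card_univ, hsqrt, ← exp_sum, Finset.sum_div, Finset.sum_neg_distrib,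
    neg_div]

lemma integral_comp_sum_sq_pi_gaussianReal (ι : Type*) [Fintype ι] [Nonempty ι]
    (g : ℝ → ℝ) :
    ∫ x, g (∑ i, x i ^ 2) ∂(Measure.pi fun _ : ι => gaussianReal 0 1)
      = ∫ t in Ioi (0 : ℝ), g t * chiSqPDF (Fintype.card ι) t := by
  set n := Fintype.card ι with hn_def
  have hdensity :
      Measurable fun x : ι → ℝ => ENNReal.ofReal (∏ i, gaussianPDFReal 0 1 (x i)) :=
    ENNReal.measurable_ofReal.comp <| Finset.measurable_prod _ fun i _ =>
      (measurable_gaussianPDFReal 0 1).comp (measurable_pi_apply i)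
  rw [pi_gaussianReal_eq_withDensity ι 0 one_ne_zero,
    integral_withDensity_eq_integral_toReal_smul hdensity
      (ae_of_all _ fun _ => ENNReal.ofReal_lt_top)]
  have hnonneg (x : ι → ℝ) : 0 ≤ ∏ i, gaussianPDFReal 0 1 (x i) :=
    Finset.prod_nonneg fun i _ => gaussianPDFReal_nonneg 0 1 (x i)
  simp only [ENNReal.toReal_ofReal (hnonneg _)]
  simp only [prod_gaussianPDFReal_zero_one, smul_eq_mul, ← hn_def]
  have hconst : (2 * π) ^ (-((n : ℝ) / 2)) * (π ^ ((n : ℝ) / 2) / Gamma ((n : ℝ) / 2))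
      = (2 ^ ((n : ℝ) / 2) * Gamma ((n : ℝ) / 2))⁻¹ := by
    rw [rpow_neg (by positivity), mul_rpow zero_le_two pi_pos.le]
    field_simp
  rw [integral_comp_sum_sq ι fun t => (2 * π) ^ (-((n : ℝ) / 2)) * exp (-t / 2) * g t,
    ← hn_def, ← integral_const_mul]
  refine setIntegral_congr_fun measurableSet_Ioi fun t _ => ?_
  rw [chiSqPDF, div_eq_mul_inv _ (2 ^ _ * _), ← hconst]
  ring

lemma gaussianPDFReal_zero_one_mul_exp_mul_sq (u x : ℝ) :
    gaussianPDFReal 0 1 x * exp (u * x ^ 2) = (√(2 * π))⁻¹ * exp (-(1 / 2 - u) * x ^ 2) := by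
  rw [gaussianPDFReal, NNReal.coe_one, mul_one, sub_zero, mul_assoc, ← exp_add]
  ring_nf

lemma integrable_exp_mul_sq_gaussianReal {u : ℝ} (hu : u < 1 / 2) :
    Integrable (fun x => exp (u * x ^ 2)) (gaussianReal 0 1) := by
  rw [gaussianReal_of_var_ne_zero 0 one_ne_zero, integrable_withDensity_iff_integrable_smul'
    (measurable_gaussianPDF 0 1) (ae_of_all _ fun _ => gaussianPDF_lt_top)]
  simp only [toReal_gaussianPDF, smul_eq_mul, gaussianPDFReal_zero_one_mul_exp_mul_sq]
  exact (integrable_exp_neg_mul_sq (by linarith)).const_mul _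

lemma mgf_sq_gaussianReal {u : ℝ} (hu : u < 1 / 2) :
    mgf (fun x => x ^ 2) (gaussianReal 0 1) u = ((1 - 2 * u) ^ ((1 : ℝ) / 2))⁻¹ := by
  have hc : 0 < 1 - 2 * u := by linarith
  rw [mgf, integral_gaussianReal_eq_integral_smul one_ne_zero]
  simp only [smul_eq_mul, gaussianPDFReal_zero_one_mul_exp_mul_sq]
  rw [integral_const_mul, integral_gaussian, ← sqrt_inv, ← sqrt_mul (by positivity),
    ← sqrt_eq_rpow, ← sqrt_inv]
  congr 1
  field_simp

lemma ProbabilityTheory.IndepFun.mgf_add_restrict_preimage {Ω : Type*} {mΩ : MeasurableSpace Ω}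
    {μ : Measure Ω} {X Y : Ω → ℝ} (hXY : IndepFun X Y μ) (hX : Measurable X)
    (hY : Measurable Y) {B : Set ℝ} (hB : MeasurableSet B) (t : ℝ) :
    mgf (X + Y) (μ.restrict (X ⁻¹' B)) t = mgf X (μ.restrict (X ⁻¹' B)) t * mgf Y μ t := by
  have hexp : Measurable fun x : ℝ => exp (t * x) := by fun_prop
  have hindep := hXY.comp (hexp.indicator hB) hexp
  have hsplit : (X ⁻¹' B).indicator (fun ω => exp (t * (X + Y) ω))
      = ((B.indicator fun x => exp (t * x)) ∘ X) * ((fun y => exp (t * y)) ∘ Y) := by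
    ext ω
    by_cases hω : X ω ∈ B
    · simp [indicator_of_mem hω, indicator_of_mem (show ω ∈ X ⁻¹' B from hω), mul_add,
        exp_add]
    · simp [indicator_of_notMem hω, indicator_of_notMem (show ω ∉ X ⁻¹' B from hω)]
  rw [mgf, mgf, mgf, ← integral_indicator (hX hB), ← integral_indicator (hX hB), hsplit,
    hindep.integral_mul_eq_mul_integral ((hexp.indicator hB).comp hX).aestronglyMeasurable
      (hexp.comp hY).aestronglyMeasurable]
  rfl

section IIDGaussian

variable {Ω ι : Type*} {mΩ : MeasurableSpace Ω} {μ : Measure Ω} {Z : ι → Ω → ℝ}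

lemma integral_comp_sum_sq_of_iIndepFun (hmeas : ∀ i, Measurable (Z i)) (hindep : iIndepFun Z μ)
    (hlaw : ∀ i, μ.map (Z i) = gaussianReal 0 1) {s : Finset ι} (hs : s.Nonempty)
    {g : ℝ → ℝ} (hg : Measurable g) :
    ∫ ω, g (∑ j ∈ s, Z j ω ^ 2) ∂μ
      = ∫ t in Ioi (0 : ℝ), g t * chiSqPDF s.card t := by
  have : Nonempty s := hs.coe_sort
  have hmap : μ.map (fun ω (i : s) => Z i ω) = Measure.pi fun _ : s => gaussianReal 0 1 := by
    rw [iIndepFun.map_fun_eq_pi_map (f := fun i : s => Z i) (fun i => (hmeas i).aemeasurable)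
      (hindep.precomp Subtype.val_injective)]
    simp only [hlaw]
  calc ∫ ω, g (∑ j ∈ s, Z j ω ^ 2) ∂μ
        = ∫ ω, g (∑ i : s, (fun i : s => Z i ω) i ^ 2) ∂μ := by
        congr with ω
        exact congrArg g (Finset.sum_coe_sort s fun j => Z j ω ^ 2).symm
    _ = ∫ x, g (∑ i, x i ^ 2) ∂(μ.map fun ω (i : s) => Z i ω) :=
        (integral_map (measurable_pi_lambda _ fun i : s => hmeas i).aemeasurable
          (by fun_prop : Measurable fun x : s → ℝ => g (∑ i, x i ^ 2)).aestronglyMeasurable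
          ).symm
    _ = ∫ t in Ioi (0 : ℝ), g t * chiSqPDF s.card t := by
        rw [hmap, integral_comp_sum_sq_pi_gaussianReal, Fintype.card_coe]

lemma integrable_exp_mul_sum_sq_of_iIndepFun (hmeas : ∀ i, Measurable (Z i))
    (hindep : iIndepFun Z μ) (hlaw : ∀ i, μ.map (Z i) = gaussianReal 0 1) (s : Finset ι)
    {u : ℝ} (hu : u < 1 / 2) :
    Integrable (fun ω => exp (u * ∑ j ∈ s, Z j ω ^ 2)) μ := by
  have := hindep.isProbabilityMeasure
  have hsq : iIndepFun (fun j ω => Z j ω ^ 2) μ :=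
    hindep.comp (fun _ x => x ^ 2) fun _ => by fun_prop
  have hint (j : ι) : Integrable (fun ω => exp (u * Z j ω ^ 2)) μ := by
    have h := integrable_exp_mul_sq_gaussianReal hu
    rw [← hlaw j] at h
    exact h.comp_measurable (hmeas j)
  simpa [Finset.sum_apply] using
    hsq.integrable_exp_mul_sum (fun j => (hmeas j).pow_const 2) (s := s) fun j _ => hint j

lemma mgf_sum_sq_of_iIndepFun (hmeas : ∀ i, Measurable (Z i)) (hindep : iIndepFun Z μ)
    (hlaw : ∀ i, μ.map (Z i) = gaussianReal 0 1) (s : Finset ι) {u : ℝ} (hu : u < 1 / 2) :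
    mgf (fun ω => ∑ j ∈ s, Z j ω ^ 2) μ u = ((1 - 2 * u) ^ ((s.card : ℝ) / 2))⁻¹ := by
  have hsq : iIndepFun (fun j ω => Z j ω ^ 2) μ :=
    hindep.comp (fun _ x => x ^ 2) fun _ => by fun_prop
  have hmgf (j : ι) : mgf (fun ω => Z j ω ^ 2) μ u = ((1 - 2 * u) ^ ((1 : ℝ) / 2))⁻¹ := by
    rw [← mgf_sq_gaussianReal hu, ← hlaw j, mgf_map (hmeas j).aemeasurable (by fun_prop)]
    rfl
  have hsum := hsq.mgf_sum (fun j => (hmeas j).pow_const 2) s (t := u)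
  rw [← Finset.sum_fn, hsum, Finset.prod_congr rfl fun j _ => hmgf j, Finset.prod_const, inv_pow,
    ← rpow_natCast, ← rpow_mul (by linarith)]
  ring_nf

lemma indepFun_sum_sq_of_disjoint (hmeas : ∀ i, Measurable (Z i)) (hindep : iIndepFun Z μ)
    {s t : Finset ι} (hst : Disjoint s t) :
    IndepFun (fun ω => ∑ j ∈ s, Z j ω ^ 2) (fun ω => ∑ j ∈ t, Z j ω ^ 2) μ := by
  have h := (hindep.indepFun_finset s t hst hmeas).comp
    (by fun_prop : Measurable fun x : s → ℝ => ∑ i, x i ^ 2)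
    (by fun_prop : Measurable fun x : t → ℝ => ∑ i, x i ^ 2)
  convert h using 1 <;> funext ω <;> exact (Finset.sum_coe_sort _ fun j => Z j ω ^ 2).symm

lemma mgf_restrict_sum_sq_gt (hmeas : ∀ i, Measurable (Z i)) (hindep : iIndepFun Z μ)
    (hlaw : ∀ i, μ.map (Z i) = gaussianReal 0 1) {s : Finset ι} (hs : s.Nonempty)
    {u a : ℝ} (hu : u < 1 / 2) (ha : 0 ≤ a) :
    mgf (fun ω => ∑ j ∈ s, Z j ω ^ 2) (μ.restrict {ω | a < ∑ j ∈ s, Z j ω ^ 2}) u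
      = chiSqTail s.card ((1 - 2 * u) * a) / (1 - 2 * u) ^ ((s.card : ℝ) / 2) := by
  have hS : Measurable fun ω => ∑ j ∈ s, Z j ω ^ 2 := by fun_prop
  have hexp : Measurable fun t : ℝ => exp (u * t) := by fun_prop
  rw [mgf, ← integral_indicator (measurableSet_lt measurable_const hS)]
  change ∫ ω, (Ioi a).indicator (fun t => exp (u * t)) (∑ j ∈ s, Z j ω ^ 2) ∂μ = _
  rw [integral_comp_sum_sq_of_iIndepFun hmeas hindep hlaw hs (hexp.indicator measurableSet_Ioi)]
  simp only [← indicator_mul_left]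
  rw [setIntegral_indicator measurableSet_Ioi, Ioi_inter_Ioi, sup_of_le_right ha,
    setIntegral_exp_mul_chiSqPDF _ hu ha]

lemma measureReal_sum_sq_gt_inter_le [DecidableEq ι] (hmeas : ∀ i, Measurable (Z i))
    (hindep : iIndepFun Z μ) (hlaw : ∀ i, μ.map (Z i) = gaussianReal 0 1) {s t : Finset ι}
    (hs : s.Nonempty) (hst : Disjoint s t) {u a : ℝ} (hu0 : 0 ≤ u) (hu : u < 1 / 2)
    (ha : 0 ≤ a) (b : ℝ) :
    μ.real ({ω | a < ∑ j ∈ s, Z j ω ^ 2} ∩ {ω | b < ∑ j ∈ s ∪ t, Z j ω ^ 2})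
      ≤ exp (-u * b) * chiSqTail s.card ((1 - 2 * u) * a)
          / (1 - 2 * u) ^ (((s ∪ t).card : ℝ) / 2) := by
  have := hindep.isProbabilityMeasure
  have hc : 0 < 1 - 2 * u := by linarith
  set S := fun ω => ∑ j ∈ s, Z j ω ^ 2
  set T := fun ω => ∑ j ∈ t, Z j ω ^ 2
  have hS : Measurable S := by fun_prop
  have hT : Measurable T := by fun_prop
  have hST (ω : Ω) : ∑ j ∈ s ∪ t, Z j ω ^ 2 = (S + T) ω := Finset.sum_union hst
  have hA : {ω | a < S ω} = S ⁻¹' Ioi a := rfl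
  simp only [hST]
  calc μ.real ({ω | a < S ω} ∩ {ω | b < (S + T) ω})
      ≤ (μ.restrict {ω | a < S ω}).real {ω | b ≤ (S + T) ω} := by
        rw [measureReal_restrict_apply (measurableSet_le measurable_const (hS.add hT)), inter_comm]
        exact measureReal_mono (inter_subset_inter_left _ fun ω (hω : b < (S + T) ω) => hω.le)
    _ ≤ exp (-u * b) * mgf (S + T) (μ.restrict {ω | a < S ω}) u :=
        measure_ge_le_exp_mul_mgf b hu0 (by
          simpa only [hST] using
            (integrable_exp_mul_sum_sq_of_iIndepFun hmeas hindep hlaw (s ∪ t) hu).restrict)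
    _ = exp (-u * b) * (chiSqTail s.card ((1 - 2 * u) * a) / (1 - 2 * u) ^ ((s.card : ℝ) / 2)
          * ((1 - 2 * u) ^ ((t.card : ℝ) / 2))⁻¹) := by
        rw [hA, (indepFun_sum_sq_of_disjoint hmeas hindep hst).mgf_add_restrict_preimage hS hT
          measurableSet_Ioi, ← hA, mgf_restrict_sum_sq_gt hmeas hindep hlaw hs hu ha,
          mgf_sum_sq_of_iIndepFun hmeas hindep hlaw t hu]
    _ = exp (-u * b) * chiSqTail s.card ((1 - 2 * u) * a)
          / (1 - 2 * u) ^ (((s ∪ t).card : ℝ) / 2) := by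
        rw [Finset.card_union_of_disjoint hst, Nat.cast_add, add_div, rpow_add hc]
        ring

end IIDGaussian

lemma measureReal_sum_range_sq_gt_inter_le {Ω : Type*} {mΩ : MeasurableSpace Ω} {μ : Measure Ω}
    {Z : ℕ → Ω → ℝ} (hmeas : ∀ i, Measurable (Z i)) (hindep : iIndepFun Z μ)
    (hlaw : ∀ i, μ.map (Z i) = gaussianReal 0 1) {I₁ : ℕ} (hI₁ : 0 < I₁) (I₂ : ℕ)
    {u a : ℝ} (hu0 : 0 ≤ u) (hu : u < 1 / 2) (ha : 0 ≤ a) (b : ℝ) :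
    μ.real ({ω | a < ∑ j ∈ Finset.range I₁, Z j ω ^ 2} ∩
        {ω | b < ∑ j ∈ Finset.range (I₁ + I₂), Z j ω ^ 2})
      ≤ exp (-u * b) * chiSqTail I₁ ((1 - 2 * u) * a)
          / (1 - 2 * u) ^ (((I₁ + I₂ : ℕ) : ℝ) / 2) := by
  have hunion :
      Finset.range I₁ ∪ Finset.Ico I₁ (I₁ + I₂) = Finset.range (I₁ + I₂) := by
    rw [Finset.range_eq_Ico, Finset.range_eq_Ico,
      Finset.Ico_union_Ico_eq_Ico (Nat.zero_le _) (Nat.le_add_right _ _)]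
  have hdisj : Disjoint (Finset.range I₁) (Finset.Ico I₁ (I₁ + I₂)) := by
    rw [Finset.range_eq_Ico]
    exact Finset.Ico_disjoint_Ico_consecutive 0 I₁ (I₁ + I₂)
  have h := measureReal_sum_sq_gt_inter_le hmeas hindep hlaw
    (Finset.nonempty_range_iff.mpr hI₁.ne') hdisj hu0 hu ha b
  rwa [hunion, Finset.card_range, Finset.card_range] at h

theorem chernoff_upper_two_transmissions_general
    {Ω : Type*} [MeasureSpace Ω]
    (Z : ℕ → Ω → ℝ) (hmeas : ∀ i, Measurable (Z i))
    (hindep : iIndepFun Z ℙ)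
    (hlaw : ∀ i, Measure.map (Z i) ℙ = gaussianReal 0 1)
    (I₁ I₂ : ℕ) (hI₁ : 0 < I₁)
    (r₁ r₂ : ℝ)
 :
    (∀ u : ℝ, 0 ≤ u → u < 1 / 2 →
      (ℙ ({ω | r₁ ^ 2 < ∑ j ∈ Finset.range I₁, Z j ω ^ 2} ∩
          {ω | r₂ ^ 2 < ∑ j ∈ Finset.range (I₁ + I₂), Z j ω ^ 2})).toReal
        ≤ Real.exp (-u * r₂ ^ 2) * chiSqTail I₁ ((1 - 2 * u) * r₁ ^ 2) /
            (1 - 2 * u) ^ (((I₁ + I₂ : ℕ) : ℝ) / 2)) ∧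
    (ℙ ({ω | r₁ ^ 2 < ∑ j ∈ Finset.range I₁, Z j ω ^ 2} ∩
        {ω | r₂ ^ 2 < ∑ j ∈ Finset.range (I₁ + I₂), Z j ω ^ 2})).toReal
      ≤ sInf {x : ℝ | ∃ u : ℝ, 0 ≤ u ∧ u < 1 / 2 ∧
          x = Real.exp (-u * r₂ ^ 2) * chiSqTail I₁ ((1 - 2 * u) * r₁ ^ 2) /
            (1 - 2 * u) ^ (((I₁ + I₂ : ℕ) : ℝ) / 2)} := by
  have hbound (u : ℝ) (hu0 : 0 ≤ u) (hu : u < 1 / 2) :=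
    measureReal_sum_range_sq_gt_inter_le hmeas hindep hlaw hI₁ I₂ hu0 hu (sq_nonneg r₁)
      (r₂ ^ 2)
  refine ⟨hbound, le_csInf ⟨_, 0, le_rfl, by norm_num, rfl⟩ ?_⟩
  rintro x ⟨u, hu0, hu, rfl⟩
  exact hbound u hu0 hu

/-- Chernoff upper bound of Lemma 1: for every `0 ≤ u < 1/2`,
`P(ζ₁ ∩ ζ₂) ≤ e^{−u r₂²} · Q_{I₁}((1 − 2u) r₁²) / (1 − 2u)^{N₂/2}`,
and consequently `P(ζ₁ ∩ ζ₂)` is at most the infimum of the right-hand side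
over all such `u`. -/
theorem chernoff_upper_two_transmissions
    {Ω : Type*} [MeasureSpace Ω] [IsProbabilityMeasure (ℙ : Measure Ω)]
    (Z : ℕ → Ω → ℝ) (hmeas : ∀ i, Measurable (Z i))
    (hindep : iIndepFun Z ℙ)
    (hlaw : ∀ i, Measure.map (Z i) ℙ = gaussianReal 0 1)
    (I₁ I₂ : ℕ) (hI₁ : 0 < I₁) (hI₂ : 0 < I₂)
    (r₁ r₂ : ℝ) (hr₁ : 0 < r₁) (hr₂ : 0 < r₂)
 :
    (∀ u : ℝ, 0 ≤ u → u < 1 / 2 →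
      (ℙ ({ω | r₁ ^ 2 < ∑ j ∈ Finset.range I₁, Z j ω ^ 2} ∩
          {ω | r₂ ^ 2 < ∑ j ∈ Finset.range (I₁ + I₂), Z j ω ^ 2})).toReal
        ≤ Real.exp (-u * r₂ ^ 2) * chiSqTail I₁ ((1 - 2 * u) * r₁ ^ 2) /
            (1 - 2 * u) ^ (((I₁ + I₂ : ℕ) : ℝ) / 2)) ∧
    (ℙ ({ω | r₁ ^ 2 < ∑ j ∈ Finset.range I₁, Z j ω ^ 2} ∩
        {ω | r₂ ^ 2 < ∑ j ∈ Finset.range (I₁ + I₂), Z j ω ^ 2})).toReal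
      ≤ sInf {x : ℝ | ∃ u : ℝ, 0 ≤ u ∧ u < 1 / 2 ∧
          x = Real.exp (-u * r₂ ^ 2) * chiSqTail I₁ ((1 - 2 * u) * r₁ ^ 2) /
            (1 - 2 * u) ^ (((I₁ + I₂ : ℕ) : ℝ) / 2)} :=
  chernoff_upper_two_transmissions_general Z hmeas hindep hlaw I₁ I₂ hI₁ r₁ r₂
end
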